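/- Let β = (π_ℓ)_{ℓ=1}^L be a chainable architecture. Then for all integers 1 ≤ q ≤ s < t ≤ L, the pair of patterns (π_q * ⋯ * π_s, π_{s+1} * ⋯ * π_t) is chainable, and r(π_q * ⋯ * π_s, π_{s+1} * ⋯ * π_t) = r(π_s, π_{s+1}). -/

import Mathlib

/-- A *pattern* is a tuple `(a, b, c, d)` of (positive) natural numbers. -/
structure Pattern where
  a : ℕ
  b : ℕ
  c : ℕ
  d : ℕ

namespace Pattern

/-- The entries of a pattern are positive integers. -/
def Pos (π : Pattern) : Prop := 0 < π.a ∧ 0 < π.b ∧ 0 < π.c ∧ 0 < π.d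

/-- Number of rows `a*b*d` of a `π`-factor. -/
def rows (π : Pattern) : ℕ := π.a * π.b * π.d

/-- Number of columns `a*c*d` of a `π`-factor. -/
def cols (π : Pattern) : ℕ := π.a * π.c * π.d

/-- `r(π₁, π₂) = a₁c₁/a₂ (= b₂d₂/d₁)`. -/
def rk (π₁ π₂ : Pattern) : ℕ := π₁.a * π₁.c / π₂.a

/-- A pair of patterns is *chainable* if `a₁c₁/a₂ = b₂d₂/d₁` is a positive integer,
`a₁ ∣ a₂` and `d₂ ∣ d₁`. -/
def Chainable (π₁ π₂ : Pattern) : Prop :=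
  π₂.a ∣ π₁.a * π₁.c ∧ π₁.d ∣ π₂.b * π₂.d ∧
    π₁.a * π₁.c / π₂.a = π₂.b * π₂.d / π₁.d ∧
    0 < π₁.a * π₁.c / π₂.a ∧ π₁.a ∣ π₂.a ∧ π₂.d ∣ π₁.d

/-- `π₁ * π₂ := (a₁, b₁d₁/d₂, a₂c₂/a₁, d₂)`. -/
instance : Mul Pattern :=
  ⟨fun π₁ π₂ => ⟨π₁.a, π₁.b * π₁.d / π₂.d, π₂.a * π₂.c / π₁.a, π₂.d⟩⟩

/-- `‖π‖₀ := a*b*c*d`. -/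
def norm0 (π : Pattern) : ℕ := π.a * π.b * π.c * π.d

end Pattern

/-- Partial products of patterns: `pprod π q k = π q * π (q+1) * ⋯ * π (q+k)`. -/
def pprod (π : ℕ → Pattern) (q : ℕ) : ℕ → Pattern
  | 0 => π q
  | k + 1 => pprod π q k * π (q + k + 1)

/-!
Along a chainable run `π q, …, π (q + k)` the product keeps the outer data of its end factors:
its `a` is `a_q`, its `d` is `d_{q+k}`, its `b d` is `b_q d_q` and its `a c` is `a_{q+k} c_{q+k}`
(the divisions in the definition of `*` are exact because the `a`'s increase and the `d`'s
decrease along the run for divisibility). The conditions defining chainability of two patterns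
and the value of `r` only involve `a₁ c₁`, `d₁`, `a₂`, `b₂ d₂` and the divisibilities
`a₁ ∣ a₂`, `d₂ ∣ d₁`, so they transfer from `(π s, π (s + 1))` to the two partial products.
-/

theorem Nat.rel_of_forall_rel_succ_lt_of_le_of_lt {β : Type*} (r : β → β → Prop)
    [Std.Refl r] [IsTrans β r] {f : ℕ → β} {L : ℕ} (h : ∀ n, n + 1 < L → r (f n) (f (n + 1)))
    {i j : ℕ} (hij : i ≤ j) (hjL : j < L) : r (f i) (f j) := by
  induction j, hij using Nat.le_induction with
  | base => exact refl _
  | succ j _ ih => exact _root_.trans (ih (by omega)) (h j hjL)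

namespace Pattern

theorem mul_a (π₁ π₂ : Pattern) : (π₁ * π₂).a = π₁.a := rfl

theorem mul_d (π₁ π₂ : Pattern) : (π₁ * π₂).d = π₂.d := rfl

theorem mul_b_mul_mul_d {π₁ π₂ : Pattern} (h : π₂.d ∣ π₁.b * π₁.d) :
    (π₁ * π₂).b * (π₁ * π₂).d = π₁.b * π₁.d :=
  Nat.div_mul_cancel h

theorem mul_a_mul_mul_c {π₁ π₂ : Pattern} (h : π₁.a ∣ π₂.a * π₂.c) :
    (π₁ * π₂).a * (π₁ * π₂).c = π₂.a * π₂.c :=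
  Nat.mul_div_cancel' h

theorem rk_congr {π₁ π₂ σ₁ σ₂ : Pattern} (hac : π₁.a * π₁.c = σ₁.a * σ₁.c) (ha : π₂.a = σ₂.a) :
    rk π₁ π₂ = rk σ₁ σ₂ := by
  rw [rk, rk, hac, ha]

theorem Chainable.congr {π₁ π₂ σ₁ σ₂ : Pattern} (hσ : Chainable σ₁ σ₂)
    (hac : π₁.a * π₁.c = σ₁.a * σ₁.c) (hd : π₁.d = σ₁.d)
    (ha : π₂.a = σ₂.a) (hbd : π₂.b * π₂.d = σ₂.b * σ₂.d)
    (hdvd_a : π₁.a ∣ π₂.a) (hdvd_d : π₂.d ∣ π₁.d) : Chainable π₁ π₂ := by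
  obtain ⟨h₁, h₂, h₃, h₄, -, -⟩ := hσ
  simp only [← hac, ← hd, ← ha, ← hbd] at h₁ h₂ h₃ h₄
  exact ⟨h₁, h₂, h₃, h₄, hdvd_a, hdvd_d⟩

end Pattern

section pprod

variable (π : ℕ → Pattern)

theorem pprod_a (q k : ℕ) : (pprod π q k).a = (π q).a := by
  induction k with
  | zero => rfl
  | succ k ih => exact ih

theorem pprod_d (q k : ℕ) : (pprod π q k).d = (π (q + k)).d := by
  cases k <;> rfl

variable {π} {L : ℕ} (hch : ∀ ℓ, ℓ + 1 < L → Pattern.Chainable (π ℓ) (π (ℓ + 1)))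
include hch

theorem a_dvd_a_of_le {i j : ℕ} (hij : i ≤ j) (hjL : j < L) : (π i).a ∣ (π j).a :=
  Nat.rel_of_forall_rel_succ_lt_of_le_of_lt (· ∣ ·) (f := fun n ↦ (π n).a)
    (fun n hn ↦ (hch n hn).2.2.2.2.1) hij hjL

theorem d_dvd_d_of_le {i j : ℕ} (hij : i ≤ j) (hjL : j < L) : (π j).d ∣ (π i).d :=
  Nat.rel_of_forall_rel_succ_lt_of_le_of_lt (fun m n ↦ n ∣ m) (f := fun n ↦ (π n).d)
    (fun n hn ↦ (hch n hn).2.2.2.2.2) hij hjL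

theorem pprod_b_mul_d {q k : ℕ} (hk : q + k < L) :
    (pprod π q k).b * (pprod π q k).d = (π q).b * (π q).d := by
  induction k with
  | zero => rfl
  | succ k ih =>
    have hdvd : (π (q + k + 1)).d ∣ (pprod π q k).b * (pprod π q k).d := by
      rw [ih (by omega)]
      exact (d_dvd_d_of_le hch (by omega) hk).trans (dvd_mul_left _ _)
    rw [pprod, Pattern.mul_b_mul_mul_d hdvd, ih (by omega)]

theorem pprod_a_mul_c {q k : ℕ} (hk : q + k < L) :
    (pprod π q k).a * (pprod π q k).c = (π (q + k)).a * (π (q + k)).c := by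
  cases k with
  | zero => rfl
  | succ k =>
    have hdvd : (pprod π q k).a ∣ (π (q + k + 1)).a * (π (q + k + 1)).c := by
      rw [pprod_a]
      exact (a_dvd_a_of_le hch (by omega) hk).trans (dvd_mul_right _ _)
    rw [pprod, Pattern.mul_a_mul_mul_c hdvd, ← add_assoc]

end pprod

theorem partial_products_chainable_general (L : ℕ) (π : ℕ → Pattern)
    (hch : ∀ ℓ, ℓ + 1 < L → Pattern.Chainable (π ℓ) (π (ℓ + 1))) :
    ∀ q s t : ℕ, q ≤ s → s < t → t < L →
      Pattern.Chainable (pprod π q (s - q)) (pprod π (s + 1) (t - (s + 1))) ∧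
      Pattern.rk (pprod π q (s - q)) (pprod π (s + 1) (t - (s + 1))) =
        Pattern.rk (π s) (π (s + 1)) := by
  intro q s t hqs hst htL
  have hs : q + (s - q) = s := by omega
  have ht : s + 1 + (t - (s + 1)) = t := by omega
  have hac := pprod_a_mul_c hch (q := q) (k := s - q) (by omega)
  have hbd := pprod_b_mul_d hch (q := s + 1) (k := t - (s + 1)) (by omega)
  rw [hs] at hac
  refine ⟨(hch s (by omega)).congr hac (by rw [pprod_d, hs]) (pprod_a π _ _) hbd ?_ ?_,
    Pattern.rk_congr hac (pprod_a π _ _)⟩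
  · rw [pprod_a, pprod_a]
    exact a_dvd_a_of_le hch (by omega) (by omega)
  · rw [pprod_d, pprod_d, hs, ht]
    exact d_dvd_d_of_le hch (by omega) htL

/-- **Lemma.** If `β = (π 0, …, π (L-1))` is chainable then, for all `0 ≤ q ≤ s < t ≤ L-1`,
the pair `(π q * ⋯ * π s, π (s+1) * ⋯ * π t)` is chainable with
`r(π q * ⋯ * π s, π (s+1) * ⋯ * π t) = r(π s, π (s+1))`. -/
theorem partial_products_chainable (L : ℕ) (π : ℕ → Pattern)
    (hPos : ∀ ℓ < L, (π ℓ).Pos)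
    (hch : ∀ ℓ, ℓ + 1 < L → Pattern.Chainable (π ℓ) (π (ℓ + 1))) :
    ∀ q s t : ℕ, q ≤ s → s < t → t < L →
      Pattern.Chainable (pprod π q (s - q)) (pprod π (s + 1) (t - (s + 1))) ∧
      Pattern.rk (pprod π q (s - q)) (pprod π (s + 1) (t - (s + 1))) =
        Pattern.rk (π s) (π (s + 1)) :=
  partial_products_chainable_general L π hch
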